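/- arXiv:2202.03196 — 2 statements merged into one kernel-verified Lean document; each statement's English description precedes it below -/
import Mathlib

section
/- There is no AGM contraction operator ÷ over an unbiased set of epistemic states (with |Ω| ≥ 2) satisfying: if ¬α ⊨ β, then Ψ ÷ β ⊨ γ implies Ψ ÷ α ÷ β ⊨ γ (postulate IC1_⇐). -/
inductive Form (V : Type) : Type
  | var : V → Form V
  | falsum : Form V
  | imp : Form V → Form V → Form V

namespace Form

def eval {V : Type} (w : V → Bool) : Form V → Bool
  | var v => w v
  | falsum => false
  | imp a b => !(eval w a) || eval w b

def neg {V : Type} (a : Form V) : Form V := imp a falsum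

def top {V : Type} : Form V := neg falsum

def conj {V : Type} (a b : Form V) : Form V := neg (imp a (neg b))

end Form

/-- Worlds (propositional interpretations) over the signature `V`. -/
abbrev World (V : Type) := V → Bool

/-- Models of a single formula. -/
def FMod {V : Type} (a : Form V) : Set (World V) := {w | a.eval w = true}

/-- Models of a set of formulas. -/
def SMod {V : Type} (X : Set (Form V)) : Set (World V) := {w | ∀ a ∈ X, a.eval w = true}

/-- Deductive closure (consequence operator). -/
def Cn {V : Type} (X : Set (Form V)) : Set (Form V) := {b | ∀ w ∈ SMod X, b.eval w = true}

/-- Minimal elements of a set of worlds w.r.t. a relation. -/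
def minSet {V : Type} (S : Set (World V)) (r : World V → World V → Prop) : Set (World V) :=
  {w ∈ S | ∀ w' ∈ S, r w w'}

/-- Total preorder: total (hence reflexive) and transitive. -/
def TotalPre {V : Type} (r : World V → World V → Prop) : Prop :=
  (∀ x y, r x y ∨ r y x) ∧ (∀ x y z, r x y → r y z → r x z)

/-- A belief change operator over epistemic states `E`: each state has a
deductively closed belief set, and the operator maps a state and a formula to a state. -/
structure BCO (V E : Type) where
  Bel : E → Set (Form V)
  closed : ∀ Ψ, Cn (Bel Ψ) = Bel Ψ
  op : E → Form V → E

/-- Models of (the belief set of) an epistemic state. -/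
def stMod {V E : Type} (O : BCO V E) (Ψ : E) : Set (World V) := SMod (O.Bel Ψ)

/-- Faithful assignment: each `le Ψ` is a total preorder; models of `Ψ` are mutually
equivalent and strictly below non-models. -/
def Faithful {V E : Type} (O : BCO V E) (le : E → World V → World V → Prop) : Prop :=
  (∀ Ψ, TotalPre (le Ψ)) ∧
  (∀ Ψ w₁ w₂, w₁ ∈ stMod O Ψ → w₂ ∈ stMod O Ψ → le Ψ w₁ w₂) ∧
  (∀ Ψ w₁ w₂, w₁ ∈ stMod O Ψ → w₂ ∉ stMod O Ψ → (le Ψ w₁ w₂ ∧ ¬ le Ψ w₂ w₁))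

/-- Contraction-compatibility: `[[Ψ ÷ α]] = [[Ψ]] ∪ min([[¬α]], ≤_Ψ)`. -/
def ContrCompat {V E : Type} (O : BCO V E) (le : E → World V → World V → Prop) : Prop :=
  ∀ Ψ (α : Form V), stMod O (O.op Ψ α) = stMod O Ψ ∪ minSet (FMod α.neg) (le Ψ)

/-- Revision-compatibility: `[[Ψ * α]] = min([[α]], ≤_Ψ)`. -/
def RevCompat {V E : Type} (O : BCO V E) (le : E → World V → World V → Prop) : Prop :=
  ∀ Ψ (α : Form V), stMod O (O.op Ψ α) = minSet (FMod α) (le Ψ)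

/-- The AGM contraction postulates (C1)–(C7) for epistemic states. -/
def AGMContr {V E : Type} (O : BCO V E) : Prop :=
  (∀ Ψ α, O.Bel (O.op Ψ α) ⊆ O.Bel Ψ) ∧
  (∀ Ψ α, α ∉ O.Bel Ψ → O.Bel Ψ ⊆ O.Bel (O.op Ψ α)) ∧
  (∀ Ψ (α : Form V), ¬ (∀ w, w ∈ FMod α) → α ∉ O.Bel (O.op Ψ α)) ∧
  (∀ Ψ α, O.Bel Ψ ⊆ Cn (O.Bel (O.op Ψ α) ∪ {α})) ∧
  (∀ Ψ α β, FMod α = FMod β → O.Bel (O.op Ψ α) = O.Bel (O.op Ψ β)) ∧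
  (∀ Ψ (α β : Form V), O.Bel (O.op Ψ α) ∩ O.Bel (O.op Ψ β) ⊆ O.Bel (O.op Ψ (α.conj β))) ∧
  (∀ Ψ (α β : Form V), β ∉ O.Bel (O.op Ψ (α.conj β)) → O.Bel (O.op Ψ (α.conj β)) ⊆ O.Bel (O.op Ψ β))

/-- Unbiasedness: every consistent set of formulas has an epistemic state whose
belief set is its deductive closure. -/
def Unbiased {V E : Type} (O : BCO V E) : Prop :=
  ∀ L : Set (Form V), (SMod L).Nonempty → ∃ Ψ : E, O.Bel Ψ = Cn L


/-!
Take a contingent formula `γ` (a propositional variable will do, since there are at least two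
worlds) and, by unbiasedness, a state `Ψ` whose beliefs are the consequences of `γ`. Contracting
`Ψ` by `¬γ` is vacuous (C2), so `Ψ ÷ ¬γ ⊨ γ`; as `¬γ ⊨ ¬γ`, (IC1_⇐) with `α := γ`, `β := ¬γ`
gives `Ψ ÷ γ ÷ ¬γ ⊨ γ`. By inclusion (C1) then `Ψ ÷ γ ⊨ γ`, contradicting success (C3).
-/

lemma SMod_singleton {V : Type} (γ : Form V) : SMod {γ} = FMod γ := by
  ext w
  simp [SMod, FMod]

lemma subset_Cn {V : Type} (X : Set (Form V)) : X ⊆ Cn X :=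
  fun _ ha _ hw => hw _ ha

lemma neg_notMem_Cn_singleton {V : Type} {γ : Form V} (hγ : (FMod γ).Nonempty) :
    γ.neg ∉ Cn {γ} := by
  obtain ⟨w, hw⟩ := hγ
  intro h
  have := h w (by rwa [SMod_singleton])
  simp_all [FMod, Form.neg, Form.eval]

lemma nonempty_of_two_le_card_world {V : Type} [Fintype V] [DecidableEq V]
    (h2 : 2 ≤ Fintype.card (World V)) : Nonempty V := by
  by_contra hV
  rw [not_nonempty_iff] at hV
  simp at h2

namespace AGMContr

variable {V E : Type} {O : BCO V E}

lemma mem_bel_op_neg (hA : AGMContr O) {Ψ : E} {γ : Form V} (hγ : γ ∈ O.Bel Ψ)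
    (hneg : γ.neg ∉ O.Bel Ψ) : γ ∈ O.Bel (O.op Ψ γ.neg) :=
  hA.2.1 Ψ γ.neg hneg hγ

lemma notMem_bel_op_op (hA : AGMContr O) (Ψ : E) {γ : Form V} (hγ : ¬ ∀ w, w ∈ FMod γ)
    (β : Form V) : γ ∉ O.Bel (O.op (O.op Ψ γ) β) :=
  fun h => hA.2.2.1 Ψ γ hγ (hA.1 _ β h)

end AGMContr

/-- no AGM contraction operator over an unbiased set of epistemic
states (with at least two worlds) satisfies (IC1_⇐). -/
theorem stmt_9 {V E : Type} [Fintype V] [DecidableEq V]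
    (h2 : 2 ≤ Fintype.card (World V)) (O : BCO V E)
    (hA : AGMContr O) (hU : Unbiased O) :
    ¬ (∀ (Ψ : E) (α β γ : Form V), FMod α.neg ⊆ FMod β →
        γ ∈ O.Bel (O.op Ψ β) → γ ∈ O.Bel (O.op (O.op Ψ α) β)) := by
  intro hIC
  obtain ⟨v⟩ := nonempty_of_two_le_card_world h2
  set γ : Form V := Form.var v
  have hsat : (FMod γ).Nonempty := ⟨fun _ => true, rfl⟩
  have hnotTaut : ¬ ∀ w, w ∈ FMod γ := fun h => Bool.false_ne_true (h fun _ => false)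
  obtain ⟨Ψ, hΨ⟩ := hU {γ} (by rwa [SMod_singleton])
  have hγΨ : γ ∈ O.Bel Ψ := hΨ ▸ subset_Cn _ rfl
  have hnegΨ : γ.neg ∉ O.Bel Ψ := hΨ ▸ neg_notMem_Cn_singleton hsat
  exact hA.notMem_bel_op_op Ψ hnotTaut γ.neg
    (hIC Ψ γ γ.neg γ subset_rfl (hA.mem_bel_op_neg hγΨ hnegΨ))
end

section
/- Let ÷ be an AGM contraction operator with contraction-compatible faithful assignment Ψ ↦ ≤_Ψ. Then ÷ satisfies (IC1_⇒): if ¬α ⊨ β then Ψ ÷ α ÷ β ⊨ γ implies Ψ ÷ β ⊨ γ, if and only if for all worlds ω₁, ω₂ ⊨ α: ω₁ ≤_Ψ ω₂ implies ω₁ ≤_{Ψ÷α} ω₂. -/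
/-! Belief sets are determined by their models, so (IC1_⇒) says exactly that
`[[Ψ ÷ β]] ⊆ [[Ψ ÷ α ÷ β]]` whenever `[[¬β]] ⊆ [[α]]`. By contraction-compatibility and
`[[Ψ]] ⊆ [[Ψ ÷ α]]` this reduces to `min([[¬β]], ≤_Ψ) ⊆ [[Ψ ÷ α]] ∪ min([[¬β]], ≤_{Ψ÷α})`, which
follows from order preservation on `[[α]]`. Conversely, over a finite signature there is a `β`
with `[[¬β]] = {ω₁, ω₂}`; if `ω₁ ≤_Ψ ω₂` then `ω₁` is a `≤_Ψ`-minimal countermodel of `β`, so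
`ω₁` is either a model of `Ψ ÷ α` or `≤_{Ψ÷α}`-minimal in `{ω₁, ω₂}`, and in both cases
`ω₁ ≤_{Ψ÷α} ω₂`. -/

namespace Form

variable {V : Type}

def disj (a b : Form V) : Form V := imp (neg a) b

@[simp]
lemma eval_neg (a : Form V) (w : World V) : a.neg.eval w = !a.eval w := by
  simp [neg, eval]

@[simp]
lemma eval_conj (a b : Form V) (w : World V) : (a.conj b).eval w = (a.eval w && b.eval w) := by
  simp [conj, eval]

@[simp]
lemma eval_disj (a b : Form V) (w : World V) : (a.disj b).eval w = (a.eval w || b.eval w) := by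
  simp [disj, eval]

end Form

open Form

section Definability

variable {V : Type}

lemma FMod_neg (a : Form V) : FMod a.neg = (FMod a)ᶜ := by
  ext w; simp [FMod]

lemma FMod_conj (a b : Form V) : FMod (a.conj b) = FMod a ∩ FMod b := by
  ext w; simp [FMod]

lemma FMod_disj (a b : Form V) : FMod (a.disj b) = FMod a ∪ FMod b := by
  ext w; simp [FMod]

lemma exists_FMod_eq_agreeOn (w : World V) (s : Finset V) :
    ∃ φ : Form V, FMod φ = {w' | ∀ v ∈ s, w' v = w v} := by
  classical
  induction s using Finset.induction_on with
  | empty => exact ⟨top, by ext; simp [FMod, top, eval]⟩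
  | insert v s _ ih =>
    obtain ⟨φ, hφ⟩ := ih
    have hlit : ∃ l : Form V, FMod l = {w' | w' v = w v} := by
      cases hv : w v
      · exact ⟨(var v).neg, by ext; simp [FMod, eval]⟩
      · exact ⟨var v, by ext; simp [FMod, eval]⟩
    obtain ⟨l, hl⟩ := hlit
    refine ⟨l.conj φ, ?_⟩
    rw [FMod_conj, hl, hφ]
    ext; simp

lemma exists_FMod_eq_singleton [Finite V] (w : World V) : ∃ φ : Form V, FMod φ = {w} := by
  have := Fintype.ofFinite V
  obtain ⟨φ, hφ⟩ := exists_FMod_eq_agreeOn w Finset.univ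
  exact ⟨φ, by rw [hφ]; ext w'; simp [funext_iff]⟩

lemma exists_FMod_eq [Finite V] (S : Set (World V)) : ∃ φ : Form V, FMod φ = S := by
  induction S, S.toFinite using Set.Finite.induction_on with
  | empty => exact ⟨falsum, by ext; simp [FMod, eval]⟩
  | @insert w S _ _ ih =>
    obtain ⟨φ, hφ⟩ := ih
    obtain ⟨χ, hχ⟩ := exists_FMod_eq_singleton w
    exact ⟨χ.disj φ, by rw [FMod_disj, hχ, hφ]; rfl⟩

end Definability

section BeliefChange

variable {V E : Type} {O : BCO V E} {le : E → World V → World V → Prop} {Ψ : E} {α β : Form V}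

lemma BCO.mem_Bel_iff (O : BCO V E) (Ψ : E) (γ : Form V) :
    γ ∈ O.Bel Ψ ↔ stMod O Ψ ⊆ FMod γ := by
  refine ⟨fun h w hw => hw γ h, fun h => ?_⟩
  rw [← O.closed Ψ]
  exact fun w hw => h hw

lemma BCO.Bel_subset_Bel_iff (O : BCO V E) (Ψ Φ : E) :
    O.Bel Ψ ⊆ O.Bel Φ ↔ stMod O Φ ⊆ stMod O Ψ := by
  refine ⟨fun h w hw γ hγ => hw γ (h hγ), fun h γ hγ => ?_⟩
  rw [O.mem_Bel_iff] at hγ ⊢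
  exact h.trans hγ

lemma Faithful.le_refl (hF : Faithful O le) (Ψ : E) (w : World V) : le Ψ w w :=
  ((hF.1 Ψ).1 w w).elim id id

lemma Faithful.le_of_mem_stMod (hF : Faithful O le) {w₁ : World V}
    (h₁ : w₁ ∈ stMod O Ψ) (w₂ : World V) : le Ψ w₁ w₂ := by
  by_cases h₂ : w₂ ∈ stMod O Ψ
  · exact hF.2.1 Ψ w₁ w₂ h₁ h₂
  · exact (hF.2.2 Ψ w₁ w₂ h₁ h₂).1

lemma ContrCompat.stMod_subset (hC : ContrCompat O le) (Ψ : E) (α : Form V) :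
    stMod O Ψ ⊆ stMod O (O.op Ψ α) := by
  rw [hC Ψ α]
  exact Set.subset_union_left

lemma ContrCompat.stMod_subset_of_preserves_le (hC : ContrCompat O le)
    (hle : ∀ ω₁ ω₂, ω₁ ∈ FMod α → ω₂ ∈ FMod α → le Ψ ω₁ ω₂ → le (O.op Ψ α) ω₁ ω₂)
    (hαβ : FMod α.neg ⊆ FMod β) :
    stMod O (O.op Ψ β) ⊆ stMod O (O.op (O.op Ψ α) β) := by
  have hβα : FMod β.neg ⊆ FMod α := by
    rw [FMod_neg] at hαβ ⊢
    exact Set.compl_subset_comm.mp hαβ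
  rw [hC Ψ β, hC (O.op Ψ α) β]
  rintro w (hw | ⟨hwβ, hwmin⟩)
  · exact Or.inl (hC.stMod_subset Ψ α hw)
  · exact Or.inr ⟨hwβ, fun w' hw' => hle w w' (hβα hwβ) (hβα hw') (hwmin w' hw')⟩

lemma ContrCompat.le_of_stMod_subset [Finite V] (hC : ContrCompat O le) (hF : Faithful O le)
    (hsub : ∀ β : Form V, FMod α.neg ⊆ FMod β →
      stMod O (O.op Ψ β) ⊆ stMod O (O.op (O.op Ψ α) β))
    {ω₁ ω₂ : World V} (h₁ : ω₁ ∈ FMod α) (h₂ : ω₂ ∈ FMod α) (h₁₂ : le Ψ ω₁ ω₂) :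
    le (O.op Ψ α) ω₁ ω₂ := by
  obtain ⟨β, hβ⟩ := exists_FMod_eq ({ω₁, ω₂}ᶜ : Set (World V))
  have hnegβ : FMod β.neg = {ω₁, ω₂} := by rw [FMod_neg, hβ, compl_compl]
  have hαβ : FMod α.neg ⊆ FMod β := by
    rw [FMod_neg, hβ, Set.compl_subset_compl]
    exact Set.insert_subset h₁ (Set.singleton_subset_iff.mpr h₂)
  have hmin : ω₁ ∈ minSet (FMod β.neg) (le Ψ) := by
    rw [hnegβ]
    refine ⟨Set.mem_insert _ _, ?_⟩
    rintro w (rfl | rfl)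
    exacts [hF.le_refl Ψ w, h₁₂]
  have hω₁ : ω₁ ∈ stMod O (O.op (O.op Ψ α) β) := hsub β hαβ (by rw [hC Ψ β]; exact Or.inr hmin)
  rw [hC (O.op Ψ α) β] at hω₁
  rcases hω₁ with hω₁ | ⟨-, hω₁min⟩
  · exact hF.le_of_mem_stMod hω₁ ω₂
  · exact hω₁min ω₂ (by rw [hnegβ]; exact Set.mem_insert_of_mem _ rfl)

end BeliefChange

theorem stmt_10_general {V E : Type} [Fintype V] (O : BCO V E)
    (le : E → World V → World V → Prop)
    (hF : Faithful O le) (hC : ContrCompat O le) :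
    (∀ (Ψ : E) (α β γ : Form V), FMod α.neg ⊆ FMod β →
        γ ∈ O.Bel (O.op (O.op Ψ α) β) → γ ∈ O.Bel (O.op Ψ β)) ↔
    (∀ (Ψ : E) (α : Form V) (ω₁ ω₂ : World V),
        ω₁ ∈ FMod α → ω₂ ∈ FMod α → le Ψ ω₁ ω₂ → le (O.op Ψ α) ω₁ ω₂) := by
  constructor
  · intro hIC Ψ α ω₁ ω₂ h₁ h₂ h₁₂
    refine hC.le_of_stMod_subset hF (fun β hαβ => ?_) h₁ h₂ h₁₂
    exact (O.Bel_subset_Bel_iff _ _).mp fun γ => hIC Ψ α β γ hαβ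
  · intro hle Ψ α β γ hαβ hγ
    exact (O.Bel_subset_Bel_iff _ _).mpr (hC.stMod_subset_of_preserves_le (hle Ψ α) hαβ) hγ

/-- (IC1_⇒) holds iff for all models `ω₁, ω₂` of `α`,
`ω₁ ≤_Ψ ω₂` implies `ω₁ ≤_{Ψ÷α} ω₂`. -/
theorem stmt_10 {V E : Type} [Fintype V] (O : BCO V E)
    (le : E → World V → World V → Prop)
    (hA : AGMContr O) (hF : Faithful O le) (hC : ContrCompat O le) :
    (∀ (Ψ : E) (α β γ : Form V), FMod α.neg ⊆ FMod β →
        γ ∈ O.Bel (O.op (O.op Ψ α) β) → γ ∈ O.Bel (O.op Ψ β)) ↔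
    (∀ (Ψ : E) (α : Form V) (ω₁ ω₂ : World V),
        ω₁ ∈ FMod α → ω₂ ∈ FMod α → le Ψ ω₁ ω₂ → le (O.op Ψ α) ω₁ ω₂) :=
  stmt_10_general O le hF hC
end
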